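/- arXiv:1603.01196 — 2 statements merged into one kernel-verified Lean document; each statement's English description precedes it below -/
import Mathlib

section
/- Let σ > 0 and let ρ(x) = √(4σ² − x²)/(2πσ²) be the semicircle density on [−2σ, 2σ]. Then for every real z with z > 2σ, the Stieltjes transform satisfies ∫_{−2σ}^{2σ} ρ(x)/(z − x) dx = (z − √(z² − 4σ²))/(2σ²). -/
open Real intervalIntegral

/-! With `a = 2σ`, the integrand `√(a² - x²) / (z - x)` has on `(-a, a)` the elementary
antiderivative `F(x) = z arcsin (x / a) - √(a² - x²) + √(z² - a²) arcsin ((a² - z x) / (a (z - x)))`.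
The Möbius map inside the last arcsin sends `±a` to `∓1`, so
`F(a) - F(-a) = π z - π √(z² - a²)`; dividing by `2πσ²` gives the Stieltjes transform. -/

theorem HasDerivAt.arcsin_of_sq_add_sq {f : ℝ → ℝ} {f' r x : ℝ} (hf : HasDerivAt f f' x)
    (hr : 0 < r) (h : f x ^ 2 + r ^ 2 = 1) :
    HasDerivAt (fun y => arcsin (f y)) (f' / r) x := by
  have hsqrt : √(1 - f x ^ 2) = r := by
    rw [show 1 - f x ^ 2 = r ^ 2 by linarith, sqrt_sq hr.le]
  have hlt : f x ^ 2 < 1 := by nlinarith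
  have hne_neg : f x ≠ -1 := by rintro hfx; simp [hfx] at hlt
  have hne_one : f x ≠ 1 := by rintro hfx; simp [hfx] at hlt
  refine ((hasDerivAt_arcsin hne_neg hne_one).comp x hf).congr_deriv ?_
  rw [hsqrt]
  ring

noncomputable def semicircleAntideriv (a z x : ℝ) : ℝ :=
  z * arcsin (x / a) - √(a ^ 2 - x ^ 2) +
    √(z ^ 2 - a ^ 2) * arcsin ((a ^ 2 - z * x) / (a * (z - x)))

section Antiderivative

variable {a z x : ℝ}

theorem hasDerivAt_arcsin_div (ha : 0 < a) (hx : x ∈ Set.Ioo (-a) a) :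
    HasDerivAt (fun y => arcsin (y / a)) (1 / √(a ^ 2 - x ^ 2)) x := by
  have hq : 0 < a ^ 2 - x ^ 2 := by nlinarith [hx.1, hx.2]
  have key := ((hasDerivAt_id' x).div_const a).arcsin_of_sq_add_sq
    (r := √(a ^ 2 - x ^ 2) / a) (by positivity) (by
      simp only [div_pow, sq_sqrt hq.le]; field_simp; ring)
  refine key.congr_deriv ?_
  field_simp

theorem hasDerivAt_sqrt_sq_sub_sq (hx : x ∈ Set.Ioo (-a) a) :
    HasDerivAt (fun y => √(a ^ 2 - y ^ 2)) (-x / √(a ^ 2 - x ^ 2)) x := by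
  have hq : 0 < a ^ 2 - x ^ 2 := by nlinarith [hx.1, hx.2]
  have key := ((hasDerivAt_pow 2 x).const_sub (a ^ 2)).sqrt hq.ne'
  refine key.congr_deriv ?_
  norm_num
  field_simp

theorem hasDerivAt_arcsin_moebius (ha : 0 < a) (hz : a < z) (hx : x ∈ Set.Ioo (-a) a) :
    HasDerivAt (fun y => arcsin ((a ^ 2 - z * y) / (a * (z - y))))
      (-√(z ^ 2 - a ^ 2) / ((z - x) * √(a ^ 2 - x ^ 2))) x := by
  have hzx : 0 < z - x := by linarith [hx.2]
  have hq : 0 < a ^ 2 - x ^ 2 := by nlinarith [hx.1, hx.2]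
  have hs : 0 < z ^ 2 - a ^ 2 := by nlinarith
  have hden : a * (z - x) ≠ 0 := by positivity
  have hmoebius : HasDerivAt (fun y => (a ^ 2 - z * y) / (a * (z - y)))
      ((a ^ 2 - z ^ 2) / (a * (z - x) ^ 2)) x := by
    have key := (((hasDerivAt_id' x).const_mul z).const_sub (a ^ 2)).div
      (((hasDerivAt_id' x).const_sub z).const_mul a) hden
    refine key.congr_deriv ?_
    field_simp
    ring
  -- `1 - ((a² - z x) / (a (z - x)))² = (a² - x²)(z² - a²) / (a (z - x))²`
  have key := hmoebius.arcsin_of_sq_add_sq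
    (r := √(a ^ 2 - x ^ 2) * √(z ^ 2 - a ^ 2) / (a * (z - x))) (by positivity) (by
      simp only [div_pow, mul_pow, sq_sqrt hq.le, sq_sqrt hs.le]; field_simp; ring)
  refine key.congr_deriv ?_
  rw [show a ^ 2 - z ^ 2 = -√(z ^ 2 - a ^ 2) ^ 2 by rw [sq_sqrt hs.le]; ring]
  field_simp

theorem hasDerivAt_semicircleAntideriv (ha : 0 < a) (hz : a < z) (hx : x ∈ Set.Ioo (-a) a) :
    HasDerivAt (semicircleAntideriv a z) (√(a ^ 2 - x ^ 2) / (z - x)) x := by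
  have hzx : 0 < z - x := by linarith [hx.2]
  have hq : 0 < a ^ 2 - x ^ 2 := by nlinarith [hx.1, hx.2]
  have hs : 0 < z ^ 2 - a ^ 2 := by nlinarith
  have key := (((hasDerivAt_arcsin_div ha hx).const_mul z).sub
    (hasDerivAt_sqrt_sq_sub_sq hx)).add ((hasDerivAt_arcsin_moebius ha hz hx).const_mul
      √(z ^ 2 - a ^ 2))
  refine key.congr_deriv ?_
  have hq' := sq_sqrt hq.le
  have hs' := sq_sqrt hs.le
  have hq_pos : 0 < √(a ^ 2 - x ^ 2) := sqrt_pos.2 hq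
  field_simp
  rw [hs', hq']
  ring

theorem continuousOn_semicircleAntideriv (ha : 0 < a) (hz : a < z) :
    ContinuousOn (semicircleAntideriv a z) (Set.Icc (-a) a) := by
  have hden : ∀ y ∈ Set.Icc (-a) a, a * (z - y) ≠ 0 := fun y hy =>
    (mul_pos ha (sub_pos.2 (hy.2.trans_lt hz))).ne'
  unfold semicircleAntideriv
  exact ((continuous_const.mul (continuous_arcsin.comp (continuous_id.div_const a))).sub
    (by fun_prop)).continuousOn.add (continuousOn_const.mul
      (continuous_arcsin.comp_continuousOn ((by fun_prop : ContinuousOn _ _).div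
        (by fun_prop) hden)))

theorem semicircleAntideriv_sub (ha : 0 < a) (hz : a < z) :
    semicircleAntideriv a z a - semicircleAntideriv a z (-a) = π * (z - √(z ^ 2 - a ^ 2)) := by
  have hright : (a ^ 2 - z * a) / (a * (z - a)) = -1 := by
    rw [div_eq_iff (mul_pos ha (sub_pos.2 hz)).ne']; ring
  have hleft : (a ^ 2 - z * -a) / (a * (z - -a)) = 1 := by
    rw [div_eq_iff (by nlinarith)]; ring
  simp only [semicircleAntideriv, hright, hleft, div_self ha.ne', neg_div, arcsin_one,
    arcsin_neg, neg_sq, sub_self, sqrt_zero]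
  ring

theorem integral_sqrt_sq_sub_sq_div_sub (ha : 0 < a) (hz : a < z) :
    ∫ x in (-a)..a, √(a ^ 2 - x ^ 2) / (z - x) = π * (z - √(z ^ 2 - a ^ 2)) := by
  have hint :
      IntervalIntegrable (fun x => √(a ^ 2 - x ^ 2) / (z - x)) MeasureTheory.volume (-a) a := by
    refine ContinuousOn.intervalIntegrable ((by fun_prop : Continuous _).continuousOn.div
      (by fun_prop) fun x hx => ?_)
    rw [Set.uIcc_of_le (by linarith)] at hx
    exact (sub_pos.2 (hx.2.trans_lt hz)).ne'
  rw [integral_eq_sub_of_hasDerivAt_of_le (by linarith) (continuousOn_semicircleAntideriv ha hz)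
    (fun x hx => hasDerivAt_semicircleAntideriv ha hz hx) hint, semicircleAntideriv_sub ha hz]

end Antiderivative

/-- Stieltjes transform of the semicircle density of variance `σ²`,
evaluated at real `z > 2σ`. -/
theorem semicircle_stieltjes_transform (σ : ℝ) (hσ : 0 < σ) (z : ℝ) (hz : 2 * σ < z) :
    ∫ x in (-(2 * σ))..(2 * σ), (Real.sqrt (4 * σ ^ 2 - x ^ 2) / (2 * π * σ ^ 2)) / (z - x)
      = (z - Real.sqrt (z ^ 2 - 4 * σ ^ 2)) / (2 * σ ^ 2) := by
  have hrescale : ∀ x : ℝ, √(4 * σ ^ 2 - x ^ 2) / (2 * π * σ ^ 2) / (z - x)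
      = (2 * π * σ ^ 2)⁻¹ * (√((2 * σ) ^ 2 - x ^ 2) / (z - x)) := fun x => by ring_nf
  simp only [hrescale]
  rw [integral_const_mul, integral_sqrt_sq_sub_sq_div_sub (by positivity) hz]
  field_simp
  ring_nf
end

section
/- Let Z be a standard real Gaussian random variable (mean 0, variance 1). Then for every natural number n and every real x, the complex expectation E[(x + iZ)ⁿ] equals He_n(x), the n-th probabilist's Hermite polynomial evaluated at x. -/
/-!
Put `m n = E[(c + iZ)ⁿ]` for `c : ℂ`. Splitting `(c + iZ)ⁿ⁺² = c (c + iZ)ⁿ⁺¹ + iZ (c + iZ)ⁿ⁺¹`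
and applying Stein's identity `E[Z f(Z)] = E[f'(Z)]` to `f z = (c + iz)ⁿ⁺¹` gives
`m (n + 2) = c m (n + 1) - (n + 1) m n`. Since `Heₙ₊₁ = X Heₙ - Heₙ'` and `Heₙ₊₁' = (n + 1) Heₙ`,
the Hermite polynomials satisfy the same recurrence, and both sequences start with `1, c`.
-/

open ProbabilityTheory MeasureTheory Polynomial
open scoped NNReal

namespace Polynomial

lemma derivative_hermite_succ (n : ℕ) :
    derivative (hermite (n + 1)) = (n + 1 : ℤ[X]) * hermite n := by
  induction n with
  | zero => simp
  | succ n ih =>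
    have h2 : derivative (derivative (hermite (n + 1))) =
        (n + 1 : ℤ[X]) * derivative (hermite n) := by
      rw [ih, derivative_mul]
      simp
    rw [hermite_succ (n + 1), derivative_sub, derivative_mul, derivative_X, h2, ih]
    push_cast
    linear_combination -(n + 1 : ℤ[X]) * hermite_succ n

lemma hermite_add_two (n : ℕ) :
    hermite (n + 2) = X * hermite (n + 1) - (n + 1 : ℤ[X]) * hermite n := by
  rw [hermite_succ (n + 1), derivative_hermite_succ]

end Polynomial

namespace ProbabilityTheory

lemma hasDerivAt_gaussianPDFReal (μ : ℝ) (v : ℝ≥0) (x : ℝ) :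
    HasDerivAt (gaussianPDFReal μ v) (-(x - μ) / v * gaussianPDFReal μ v x) x := by
  have hexponent : HasDerivAt (fun y ↦ -(y - μ) ^ 2 / (2 * v)) (-(x - μ) / v) x :=
    ((((hasDerivAt_id' x).sub_const μ).fun_pow 2).fun_neg.div_const (2 * (v : ℝ))).congr_deriv
      (by ring)
  rw [gaussianPDFReal_def]
  exact (hexponent.exp.const_mul _).congr_deriv (by ring)

variable {μ : ℝ} {v : ℝ≥0} {E : Type*} [NormedAddCommGroup E] [NormedSpace ℝ E]

lemma integrable_gaussianReal_iff {f : ℝ → E} (hv : v ≠ 0) :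
    Integrable f (gaussianReal μ v) ↔ Integrable (fun x ↦ gaussianPDFReal μ v x • f x) := by
  rw [gaussianReal_of_var_ne_zero μ hv, integrable_withDensity_iff_integrable_smul'
    (measurable_gaussianPDF μ v) (ae_of_all _ fun _ ↦ gaussianPDF_lt_top)]
  simp_rw [toReal_gaussianPDF]

/-- Stein's identity. -/
theorem integral_sub_smul_gaussianReal {f f' : ℝ → E} (hf : ∀ x, HasDerivAt f (f' x) x)
    (hfi : Integrable f (gaussianReal μ v)) (hf'i : Integrable f' (gaussianReal μ v))
    (hxfi : Integrable (fun x ↦ (x - μ) • f x) (gaussianReal μ v)) :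
    ∫ x, (x - μ) • f x ∂gaussianReal μ v = (v : ℝ) • ∫ x, f' x ∂gaussianReal μ v := by
  rcases eq_or_ne v 0 with rfl | hv
  · rw [gaussianReal_zero_var, integral_congr_ae (ae_eq_dirac _)]
    simp
  rw [integrable_gaussianReal_iff hv] at hfi hf'i hxfi
  have hsmul (x : ℝ) : (-(x - μ) / v * gaussianPDFReal μ v x) • f x
      = -(v : ℝ)⁻¹ • gaussianPDFReal μ v x • (x - μ) • f x := by
    simp only [smul_smul]
    congr 1
    ring
  have hparts := integral_bilinear_hasDerivAt_right_eq_neg_left_of_integrable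
    (L := ContinuousLinearMap.lsmul ℝ ℝ) (fun x _ ↦ hasDerivAt_gaussianPDFReal μ v x)
    (fun x _ ↦ hf x) hf'i
    (by simpa only [ContinuousLinearMap.lsmul_apply, hsmul] using hxfi.fun_smul (-(v : ℝ)⁻¹))
    hfi
  simp only [ContinuousLinearMap.lsmul_apply, hsmul, integral_smul] at hparts
  rw [integral_gaussianReal_eq_integral_smul hv, integral_gaussianReal_eq_integral_smul hv, hparts,
    neg_smul, neg_neg, smul_smul, mul_inv_cancel₀ (NNReal.coe_ne_zero.mpr hv), one_smul]

lemma integrable_aeval_gaussianReal (P : ℂ[X]) :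
    Integrable (fun x : ℝ ↦ aeval (x : ℂ) P) (gaussianReal μ v) := by
  induction P using Polynomial.induction_on' with
  | add p q hp hq => simpa only [map_add] using hp.fun_add hq
  | monomial k a =>
    have hmoment : Integrable (fun x : ℝ ↦ ‖x‖ ^ k) (gaussianReal μ v) :=
      (memLp_id_gaussianReal' k (ENNReal.natCast_ne_top k)).integrable_norm_pow'
    refine (hmoment.const_mul ‖a‖).mono' (by fun_prop) (ae_of_all _ fun x ↦ ?_)
    simp [aeval_monomial]

open Complex

lemma integral_add_I_mul_pow_add_two_gaussianReal (c : ℂ) (n : ℕ) :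
    ∫ z : ℝ, (c + I * z) ^ (n + 2) ∂gaussianReal 0 1
      = c * ∫ z : ℝ, (c + I * z) ^ (n + 1) ∂gaussianReal 0 1
        - (n + 1) * ∫ z : ℝ, (c + I * z) ^ n ∂gaussianReal 0 1 := by
  have hpow (k : ℕ) : Integrable (fun z : ℝ ↦ (c + I * z) ^ k) (gaussianReal 0 1) :=
    (integrable_aeval_gaussianReal ((C c + C I * X) ^ k)).congr (ae_of_all _ fun z ↦ by simp)
  have hmul (k : ℕ) : Integrable (fun z : ℝ ↦ (z : ℂ) * (c + I * z) ^ k) (gaussianReal 0 1) :=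
    (integrable_aeval_gaussianReal (X * (C c + C I * X) ^ k)).congr (ae_of_all _ fun z ↦ by simp)
  have hderiv (z : ℝ) : HasDerivAt (fun z : ℝ ↦ (c + I * z) ^ (n + 1))
      ((n + 1) * I * (c + I * z) ^ n) z :=
    ((((hasDerivAt_id' (z : ℂ)).const_mul I).const_add c).pow (n + 1)).comp_ofReal.congr_deriv
      (by push_cast; ring)
  have hstein : ∫ z : ℝ, (z : ℂ) * (c + I * z) ^ (n + 1) ∂gaussianReal 0 1
      = (n + 1) * I * ∫ z : ℝ, (c + I * z) ^ n ∂gaussianReal 0 1 := by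
    simpa [Complex.real_smul, integral_const_mul] using
      integral_sub_smul_gaussianReal hderiv (hpow _) ((hpow n).const_mul _)
        (by simpa [Complex.real_smul] using hmul (n + 1))
  calc ∫ z : ℝ, (c + I * z) ^ (n + 2) ∂gaussianReal 0 1
      = ∫ z : ℝ, c * (c + I * z) ^ (n + 1) + I * ((z : ℂ) * (c + I * z) ^ (n + 1))
          ∂gaussianReal 0 1 := by
        congr 1 with z
        ring
    _ = c * ∫ z : ℝ, (c + I * z) ^ (n + 1) ∂gaussianReal 0 1
        - (n + 1) * ∫ z : ℝ, (c + I * z) ^ n ∂gaussianReal 0 1 := by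
        rw [integral_add ((hpow _).const_mul c) ((hmul _).const_mul I), integral_const_mul,
          integral_const_mul, hstein]
        linear_combination (n + 1) * (∫ z : ℝ, (c + I * z) ^ n ∂gaussianReal 0 1) * I_sq

theorem integral_add_I_mul_pow_gaussianReal (c : ℂ) (n : ℕ) :
    ∫ z : ℝ, (c + I * z) ^ n ∂gaussianReal 0 1 = aeval c (hermite n) := by
  induction n using Nat.twoStepInduction with
  | zero => simp
  | one =>
    have hlin : Integrable (fun z : ℝ ↦ I * z) (gaussianReal 0 1) :=
      (integrable_aeval_gaussianReal (C I * X)).congr (ae_of_all _ fun z ↦ by simp)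
    simp only [pow_one]
    rw [integral_add (integrable_const c) hlin, integral_const_mul, integral_complex_ofReal]
    simp
  | more n ih₀ ih₁ =>
    rw [integral_add_I_mul_pow_add_two_gaussianReal, ih₀, ih₁, hermite_add_two]
    simp

end ProbabilityTheory

/-- For a standard Gaussian `Z`, `E[(x + iZ)ⁿ] = Heₙ(x)`, the `n`-th probabilist's
Hermite polynomial. -/
theorem gaussian_expectation_hermite (n : ℕ) (x : ℝ) :
    ∫ z : ℝ, ((x : ℂ) + Complex.I * (z : ℂ)) ^ n ∂(gaussianReal 0 1)
      = Polynomial.aeval (x : ℂ) (Polynomial.hermite n) :=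
  integral_add_I_mul_pow_gaussianReal x n
end
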